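/- Let a : ℂ → ℂ be meromorphic on a domain containing a simple closed contour C, such that 1/(1+a(ω)) has only simple poles inside C, located at λ₁,…,λ_N, with residues 1/a'(λ_j). Then for any function F(ω₁,…,ω_n) holomorphic on and inside C^n, symmetric in its arguments, and vanishing whenever two arguments coincide, one has (1/n!)∮_{C^n} ∏_{j=1}^n dω_j/(2πi(1+a(ω_j))) · F(ω₁,…,ω_n) = Σ_{S⊆{1,…,N}, |S|=n} F((λ_j)_{j∈S}) / ∏_{j∈S} a'(λ_j). -/

import Mathlib

/-! On the circle `1/(1 + a) = g + ∑ⱼ 1/(a'(λⱼ)(z - λⱼ))` with `g` holomorphic on the disc, so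
Cauchy's theorem and Cauchy's integral formula give `∮ h(z) dz / (2πi(1 + a(z))) = ∑ⱼ h(λⱼ)/a'(λⱼ)`
for every `h` holomorphic on the closed disc. Integrating out one variable at a time (`F` is
holomorphic in each variable separately), the `n`-fold integral becomes the sum of
`F(λ ∘ f) ∏ᵢ 1/a'(λ_{f i})` over all maps `f : Fin n → Fin N`. Non-injective `f` contribute nothing
because `F` vanishes on the diagonals, and the injective ones are the orderings `e_S ∘ σ` of the
`n`-element subsets `S`; by symmetry all `n!` orderings of `S` contribute the same term. -/

open Metric

/-- Iterated circle contour integral over `n` variables. -/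
noncomputable def iterCircleInt (c : ℂ) (R : ℝ) : (n : ℕ) → ((Fin n → ℂ) → ℂ) → ℂ
  | 0, F => F ![]
  | n + 1, F => ∮ z in C(c, R), iterCircleInt c R n (fun w => F (Fin.cons z w))

open Finset Complex Real Function

theorem circleIntegral_mul_eq_sum_residues {ι : Type*} [Fintype ι] {c : ℂ} {R : ℝ}
    (hR : 0 ≤ R) {p r : ι → ℂ} {g h k : ℂ → ℂ} (hp : ∀ j, p j ∈ ball c R)
    (hg : DifferentiableOn ℂ g (closedBall c R)) (hh : DifferentiableOn ℂ h (closedBall c R))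
    (hk : ∀ z ∈ sphere c R, 2 * π * I * k z = g z + ∑ j, r j / (z - p j)) :
    (∮ z in C(c, R), h z * k z) = ∑ j, r j * h (p j) := by
  have h2πI : (2 * π * I : ℂ) ≠ 0 := by simp [pi_ne_zero]
  have hne : ∀ z ∈ sphere c R, ∀ j, z - p j ≠ 0 := fun z hz j =>
    sub_ne_zero.mpr fun hzp => sphere_disjoint_ball.ne_of_mem hz (hp j) hzp
  have hcont : ∀ j, CircleIntegrable (fun z => r j * ((z - p j)⁻¹ * h z)) c R := fun j =>
    (continuousOn_const.mul (((continuousOn_id.sub continuousOn_const).inv₀ (hne · · j)).mul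
      (hh.continuousOn.mono sphere_subset_closedBall))).circleIntegrable hR
  have hgh : CircleIntegrable (fun z => g z * h z) c R :=
    ((hg.mul hh).continuousOn.mono sphere_subset_closedBall).circleIntegrable hR
  have hcauchy : (∮ z in C(c, R), g z * h z) = 0 :=
    ((hg.mul hh).mono closure_ball_subset_closedBall).diffContOnCl.circleIntegral_eq_zero hR
  have hresidue : ∀ j, (∮ z in C(c, R), (z - p j)⁻¹ * h z) = 2 * π * I * h (p j) := fun j => by
    simpa only [smul_eq_mul] using hh.circleIntegral_sub_inv_smul (hp j)
  calc (∮ z in C(c, R), h z * k z)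
      = ∮ z in C(c, R), (2 * π * I)⁻¹ * (g z * h z + ∑ j, r j * ((z - p j)⁻¹ * h z)) := by
        refine circleIntegral.integral_congr hR fun z hz => ?_
        rw [← inv_mul_cancel_left₀ h2πI (k z), hk z hz, mul_left_comm, mul_add, mul_sum,
          mul_comm (h z)]
        congr 2
        exact sum_congr rfl fun j _ => by ring
    _ = (2 * π * I)⁻¹ * ∑ j, r j * (2 * π * I * h (p j)) := by
        rw [circleIntegral.integral_const_mul, circleIntegral.integral_add hgh
          (CircleIntegrable.fun_sum _ fun j _ => hcont j), circleIntegral.integral_fun_sum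
          fun j _ => hcont j, hcauchy, zero_add]
        simp only [circleIntegral.integral_const_mul, hresidue]
    _ = ∑ j, r j * h (p j) := by
        rw [mul_sum]
        exact sum_congr rfl fun j _ => by field_simp

def SeparatelyDifferentiableOn {n : ℕ} (F : (Fin n → ℂ) → ℂ) (s : Set ℂ) : Prop :=
  ∀ (i : Fin n) (w : Fin n → ℂ), (∀ j, w j ∈ s) →
    DifferentiableOn ℂ (fun z => F (update w i z)) s

namespace SeparatelyDifferentiableOn

variable {n : ℕ} {F : (Fin (n + 1) → ℂ) → ℂ} {s : Set ℂ}

theorem differentiableOn_cons (hF : SeparatelyDifferentiableOn F s) {w : Fin n → ℂ}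
    (hw : ∀ j, w j ∈ s) : DifferentiableOn ℂ (fun z => F (Fin.cons z w)) s := by
  rcases s.eq_empty_or_nonempty with rfl | ⟨z₀, hz₀⟩
  · exact differentiableOn_empty
  have hcons : ∀ j, (Fin.cons z₀ w : Fin (n + 1) → ℂ) j ∈ s := Fin.cases hz₀ hw
  simpa only [Fin.update_cons_zero] using hF 0 _ hcons

theorem cons {z : ℂ} (hF : SeparatelyDifferentiableOn F s) (hz : z ∈ s) :
    SeparatelyDifferentiableOn (fun w => F (Fin.cons z w)) s := fun i w hw => by
  simpa only [Fin.cons_update] using hF i.succ _ (Fin.cases hz hw)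

end SeparatelyDifferentiableOn

theorem iterCircleInt_succ (c : ℂ) (R : ℝ) (n : ℕ) (F : (Fin (n + 1) → ℂ) → ℂ) :
    iterCircleInt c R (n + 1) F =
      ∮ z in C(c, R), iterCircleInt c R n (fun w => F (Fin.cons z w)) := rfl

theorem iterCircleInt_const_mul (c : ℂ) (R : ℝ) (k : ℂ) :
    ∀ (n : ℕ) (F : (Fin n → ℂ) → ℂ),
      iterCircleInt c R n (fun w => k * F w) = k * iterCircleInt c R n F
  | 0, _ => rfl
  | n + 1, F => by
    simp only [iterCircleInt_succ, iterCircleInt_const_mul c R k n,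
      circleIntegral.integral_const_mul]

theorem iterCircleInt_mul_prod_eq_sum {ι : Type*} [Fintype ι] {c : ℂ} {R : ℝ} (hR : 0 ≤ R)
    {K : ℂ → ℂ} {p r : ι → ℂ} (hp : ∀ j, p j ∈ closedBall c R)
    (hK : ∀ h : ℂ → ℂ, DifferentiableOn ℂ h (closedBall c R) →
      (∮ z in C(c, R), h z * K z) = ∑ j, r j * h (p j)) :
    ∀ (n : ℕ) (F : (Fin n → ℂ) → ℂ), SeparatelyDifferentiableOn F (closedBall c R) →
      iterCircleInt c R n (fun w => F w * ∏ i, K (w i)) =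
        ∑ f : Fin n → ι, F (p ∘ f) * ∏ i, r (f i)
  | 0, F, _ => by simp [iterCircleInt, Subsingleton.elim _ ![]]
  | n + 1, F, hF => by
    set h : ℂ → ℂ := fun z => ∑ f : Fin n → ι, F (Fin.cons z (p ∘ f)) * ∏ i, r (f i)
    have hh : DifferentiableOn ℂ h (closedBall c R) :=
      DifferentiableOn.fun_sum fun f _ =>
        (hF.differentiableOn_cons fun i => hp (f i)).mul_const _
    have hinner : ∀ z ∈ sphere c R,
        iterCircleInt c R n (fun w => F (Fin.cons z w) * ∏ i, K ((Fin.cons z w : _ → ℂ) i)) =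
          h z * K z := fun z hz => by
      simp only [Fin.prod_univ_succ, Fin.cons_zero, Fin.cons_succ, mul_left_comm _ (K z),
        iterCircleInt_const_mul]
      rw [iterCircleInt_mul_prod_eq_sum hR hp hK n _ (hF.cons (sphere_subset_closedBall hz)),
        mul_comm]
    rw [iterCircleInt_succ, circleIntegral.integral_congr hR hinner, hK h hh,
      ← (Fin.consEquiv fun _ => ι).sum_comp, Fintype.sum_prod_type]
    refine sum_congr rfl fun j _ => ?_
    simp only [h, mul_sum, Fin.consEquiv_apply, Fin.prod_univ_succ, Fin.cons_zero,
      Fin.cons_succ]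
    refine sum_congr rfl fun f _ => ?_
    rw [show p ∘ Fin.consEquiv (fun _ => ι) (j, f) = Fin.cons (p j) (p ∘ f) from
      Fin.comp_cons p j f]
    ring

section Symmetrization

variable {ι : Type*} [LinearOrder ι] {n : ℕ}

theorem orderEmbOfFin_comp_perm_injective :
    Injective fun q : {S : Finset ι // S.card = n} × Equiv.Perm (Fin n) =>
      ⇑(q.1.1.orderEmbOfFin q.1.2) ∘ q.2 := by
  rintro ⟨⟨S, hS⟩, σ⟩ ⟨⟨T, hT⟩, τ⟩ heq
  have hST : S = T := by
    have := congrArg Set.range heq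
    simp only [EquivLike.range_comp, range_orderEmbOfFin, coe_inj] at this
    exact this
  subst hST
  have hστ : ⇑σ = ⇑τ := (S.orderEmbOfFin hS).injective.comp_left heq
  rw [DFunLike.coe_injective hστ]

theorem Function.Injective.exists_orderEmbOfFin_comp_perm {f : Fin n → ι} (hf : Injective f) :
    ∃ q : {S : Finset ι // S.card = n} × Equiv.Perm (Fin n),
      ⇑(q.1.1.orderEmbOfFin q.1.2) ∘ q.2 = f := by
  set S := univ.image f
  have hS : S.card = n := by simp [S, card_image_of_injective _ hf]
  let σ : Fin n → Fin n := fun i =>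
    (S.orderIsoOfFin hS).symm ⟨f i, mem_image_of_mem f (mem_univ i)⟩
  have hσ : Injective σ := fun i j hij => hf (by simpa [σ] using hij)
  refine ⟨⟨⟨S, hS⟩, Equiv.ofBijective σ (Finite.injective_iff_bijective.mp hσ)⟩,
    funext fun i => ?_⟩
  simp [σ, ← coe_orderIsoOfFin_apply]

theorem Finset.prod_orderEmbOfFin {M : Type*} [CommMonoid M] (s : Finset ι) (h : s.card = n)
    (f : ι → M) : ∏ i, f (s.orderEmbOfFin h i) = ∏ j ∈ s, f j := by
  conv_rhs => rw [← s.map_orderEmbOfFin_univ h, prod_map]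
  rfl

theorem sum_eq_factorial_smul_sum_orderEmbOfFin {M : Type*} [AddCommMonoid M] [Fintype ι]
    {Φ : (Fin n → ι) → M}
    (hΦ_perm : ∀ (σ : Equiv.Perm (Fin n)) (f : Fin n → ι), Φ (f ∘ σ) = Φ f)
    (hΦ_zero : ∀ f, ¬ Injective f → Φ f = 0) :
    ∑ f, Φ f = n.factorial • ∑ S : {S : Finset ι // S.card = n}, Φ (S.1.orderEmbOfFin S.2) := by
  rw [← Fintype.sum_of_injective _ orderEmbOfFin_comp_perm_injective
    (fun q => Φ (⇑(q.1.1.orderEmbOfFin q.1.2) ∘ q.2)) Φ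
    (fun f hf => hΦ_zero f fun hinj => hf hinj.exists_orderEmbOfFin_comp_perm) fun _ => rfl,
    Fintype.sum_prod_type, smul_sum]
  refine sum_congr rfl fun S _ => ?_
  calc ∑ σ : Equiv.Perm (Fin n), Φ (⇑(S.1.orderEmbOfFin S.2) ∘ σ)
      = ∑ _σ : Equiv.Perm (Fin n), Φ (S.1.orderEmbOfFin S.2) :=
        sum_congr rfl fun σ _ => hΦ_perm σ _
    _ = n.factorial • Φ (S.1.orderEmbOfFin S.2) := by simp [Fintype.card_perm]

end Symmetrization

theorem stmt5_general (c : ℂ) (R : ℝ) (hR : 0 < R) (N n : ℕ) (a : ℂ → ℂ)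
    (lam : Fin N → ℂ) (hlam : ∀ j, lam j ∈ ball c R)
    (g : ℂ → ℂ) (hg : DifferentiableOn ℂ g (closedBall c R))
    (hpoles : ∀ z ∈ closedBall c R, (∀ j, z ≠ lam j) →
      1 / (1 + a z) = g z + ∑ j, 1 / (deriv a (lam j) * (z - lam j)))
    (F : (Fin n → ℂ) → ℂ)
    (hFhol : ∀ (i : Fin n) (w : Fin n → ℂ), (∀ j, w j ∈ closedBall c R) →
      DifferentiableOn ℂ (fun z => F (Function.update w i z)) (closedBall c R))
    (hFsym : ∀ (σ : Equiv.Perm (Fin n)) (w : Fin n → ℂ), F (w ∘ σ) = F w)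
    (hFvan : ∀ (w : Fin n → ℂ) (i j : Fin n), i ≠ j → w i = w j → F w = 0) :
    (1 / (n.factorial : ℂ)) *
      iterCircleInt c R n
        (fun w => F w * ∏ j, 1 / (2 * Real.pi * Complex.I * (1 + a (w j)))) =
    ∑ S : {S : Finset (Fin N) // S.card = n},
      F (fun i => lam ((S.1.orderIsoOfFin S.2 i : Fin N))) /
        ∏ j ∈ S.1, deriv a (lam j) := by
  have hkernel : ∀ h : ℂ → ℂ, DifferentiableOn ℂ h (closedBall c R) →
      (∮ z in C(c, R), h z * (1 / (2 * π * I * (1 + a z)))) =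
        ∑ j, (deriv a (lam j))⁻¹ * h (lam j) := fun h hh =>
    circleIntegral_mul_eq_sum_residues hR.le hlam hg hh fun z hz => by
      have hz_ne : ∀ j, z ≠ lam j := fun j => sphere_disjoint_ball.ne_of_mem hz (hlam j)
      rw [mul_one_div, div_mul_cancel_left₀ (by simp [pi_ne_zero]), ← one_div,
        hpoles z (sphere_subset_closedBall hz) hz_ne]
      simp only [mul_inv, div_eq_mul_inv, one_mul]
  have hΦ_perm : ∀ (σ : Equiv.Perm (Fin n)) (f : Fin n → Fin N),
      F (lam ∘ f ∘ σ) * ∏ i, (deriv a (lam (f (σ i))))⁻¹ =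
        F (lam ∘ f) * ∏ i, (deriv a (lam (f i)))⁻¹ :=
    fun σ f => by rw [← comp_assoc, hFsym, Equiv.prod_comp σ fun i => (deriv a (lam (f i)))⁻¹]
  have hΦ_zero : ∀ f : Fin n → Fin N, ¬ Injective f →
      F (lam ∘ f) * ∏ i, (deriv a (lam (f i)))⁻¹ = 0 := fun f hf => by
    obtain ⟨i, j, hij, hne⟩ := not_injective_iff.mp hf
    rw [hFvan _ i j hne (congrArg lam hij), zero_mul]
  rw [iterCircleInt_mul_prod_eq_sum hR.le (fun j => ball_subset_closedBall (hlam j)) hkernel n F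
    hFhol, sum_eq_factorial_smul_sum_orderEmbOfFin hΦ_perm hΦ_zero, nsmul_eq_mul, ← mul_assoc,
    one_div_mul_cancel (Nat.cast_ne_zero.mpr n.factorial_ne_zero), one_mul]
  refine sum_congr rfl fun S _ => ?_
  rw [Finset.prod_orderEmbOfFin S.1 S.2 fun j => (deriv a (lam j))⁻¹, prod_inv_distrib, div_eq_mul_inv]
  rfl

/-- if 1/(1+a) has only simple poles inside the contour, at λ₁,…,λ_N, with
residues 1/a'(λ_j) (encoded by the partial-fraction decomposition hypothesis `hpoles`),
then for F symmetric, holomorphic in each variable and vanishing at coinciding arguments,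
(1/n!)∮_{C^n} ∏ dω_j/(2πi(1+a(ω_j)))·F(ω) = Σ_{|S|=n} F((λ_j)_{j∈S})/∏_{j∈S} a'(λ_j). -/
theorem stmt5 (c : ℂ) (R : ℝ) (hR : 0 < R) (N n : ℕ) (a : ℂ → ℂ)
    (lam : Fin N → ℂ) (hlam : ∀ j, lam j ∈ ball c R)
    (hlam' : Function.Injective lam)
    (hder : ∀ j, deriv a (lam j) ≠ 0)
    (g : ℂ → ℂ) (hg : DifferentiableOn ℂ g (closedBall c R))
    (hpoles : ∀ z ∈ closedBall c R, (∀ j, z ≠ lam j) →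
      1 / (1 + a z) = g z + ∑ j, 1 / (deriv a (lam j) * (z - lam j)))
    (F : (Fin n → ℂ) → ℂ)
    (hFhol : ∀ (i : Fin n) (w : Fin n → ℂ), (∀ j, w j ∈ closedBall c R) →
      DifferentiableOn ℂ (fun z => F (Function.update w i z)) (closedBall c R))
    (hFsym : ∀ (σ : Equiv.Perm (Fin n)) (w : Fin n → ℂ), F (w ∘ σ) = F w)
    (hFvan : ∀ (w : Fin n → ℂ) (i j : Fin n), i ≠ j → w i = w j → F w = 0) :
    (1 / (n.factorial : ℂ)) *
      iterCircleInt c R n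
        (fun w => F w * ∏ j, 1 / (2 * Real.pi * Complex.I * (1 + a (w j)))) =
    ∑ S : {S : Finset (Fin N) // S.card = n},
      F (fun i => lam ((S.1.orderIsoOfFin S.2 i : Fin N))) /
        ∏ j ∈ S.1, deriv a (lam j) :=
  stmt5_general c R hR N n a lam hlam g hg hpoles F hFhol hFsym hFvan
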